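/- Let a be a set of distinct regular cardinals each greater than |a|. Then pcf(a) contains at most 2^{|a|} cardinals, i.e., |pcf(a)| ≤ 2^{|a|}. -/

import Mathlib

/-!
Write `J_{≤θ}` (resp. `J_{<θ}`) for the ideal of those `b ⊆ a` such that every ultrafilter on
`a` containing `b` gives `∏ a` cofinality `≤ θ` (resp. `< θ`). The heart of the proof is
Shelah's theorem that `J_{≤θ}` is `θ⁺`-directed: any `θ` functions in `∏ a` have a common upper
bound modulo `J_{≤θ}`. Fix a regular `κ` with `|a| < κ ≤ min a`; the proof is by induction on
the number `μ` of functions. If the coordinates `≤ μ` form a set in `J_{≤θ}`, take pointwise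
suprema on the others; otherwise `κ < μ`. For singular `μ`, split the family into `cf μ`
smaller ones. For regular `μ`, first turn the family into a `J_{≤θ}`-increasing sequence
`⟨g_α : α < μ⟩`, then iterate for `κ` steps the operation that pushes a candidate bound `h_ξ`
above an upper bound of all `g_α` modulo an ultrafilter witnessing its failure; since the sets
`{h_ξ < g_β}` decrease in `ξ` and `|a| < κ`, they stabilise, so this cannot fail at every step.

If `θ = cf (∏ a / D)`, take a cofinal family of size `θ` and a bound `h` of it modulo `J_{≤θ}`;
some member `f` of the family dominates `h + 1` modulo `D`, so `b_θ = {h < f}` lies in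
`J_{≤θ}` and in `D`, hence not in `J_{<θ}`. As `J_{≤θ} ⊆ J_{<θ'}` for `θ < θ'`, the map
`θ ↦ b_θ` is injective from `pcf a` into the power set of `a`.
-/

open Cardinal Ordinal

/-- The set of choice functions on a set `a` of cardinals: functions picking, for each
cardinal `λ ∈ a`, an ordinal below the initial ordinal of `λ`. -/
def ProdChoice (a : Set Cardinal.{0}) : Set (a → Ordinal.{0}) :=
  { f | ∀ i : a, f i < (i : Cardinal).ord }

/-- The cofinality of the reduced product `∏ a / F`: the least cardinality of a family
`S` of choice functions such that every choice function is `≤` some member of `S` on a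
set of indices belonging to `F` (this is the cofinality of the linearly ordered
ultraproduct `∏ a / F`). -/
noncomputable def cofUlt (a : Set Cardinal.{0}) (F : Ultrafilter a) : Cardinal.{1} :=
  sInf { c : Cardinal.{1} | ∃ S : Set (a → Ordinal.{0}), S ⊆ ProdChoice a ∧ #S = c ∧
    ∀ g ∈ ProdChoice a, ∃ f ∈ S, { i | g i ≤ f i } ∈ F }

/-- `pcf a` is the set of possible cofinalities of `∏ a`: cardinals `θ` such that for some
ultrafilter `F` on `a`, the cofinality of the linear order `∏ a / F` is `θ`. -/
def pcf (a : Set Cardinal.{0}) : Set Cardinal.{0} :=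
  { θ | ∃ F : Ultrafilter a, cofUlt a F = Cardinal.lift.{1} θ }

/-- The cofinality of the product `∏ a` under pointwise domination: the least cardinality
of a set `P` of choice functions such that every choice function is dominated pointwise by
a member of `P`. -/
noncomputable def prodCof (a : Set Cardinal.{0}) : Cardinal.{1} :=
  sInf { c : Cardinal.{1} | ∃ S : Set (a → Ordinal.{0}), S ⊆ ProdChoice a ∧ #S = c ∧
    ∀ g ∈ ProdChoice a, ∃ f ∈ S, ∀ i, g i ≤ f i }

/-- `PPset lam kap` is the set of cofinalities of ultraproducts `∏ a / F`, where `a` is a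
set of at most `kap` regular cardinals below `lam`, unbounded in `lam`, and `F` is an
ultrafilter on `a` containing no subset of `a` bounded below `lam`. -/
def PPset (lam kap : Cardinal.{0}) : Set Cardinal.{0} :=
  { θ | ∃ (a : Set Cardinal.{0}) (F : Ultrafilter a),
      (∀ μ ∈ a, μ.IsRegular ∧ μ < lam) ∧
      #a ≤ Cardinal.lift.{1} kap ∧
      (∀ μ < lam, ∃ ν ∈ a, μ < ν) ∧
      (∀ b ∈ F, ¬ ∃ μ < lam, ∀ ν ∈ b, (ν : Cardinal) ≤ μ) ∧
      cofUlt a F = Cardinal.lift.{1} θ }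

/-- The pseudopower `pp_κ(λ)`: the supremum of the cofinalities in `PPset lam kap`. -/
noncomputable def ppc (lam kap : Cardinal.{0}) : Cardinal.{0} :=
  sSup (PPset lam kap)

/-- `pp λ = pp_{cof λ}(λ)`. -/
noncomputable def pp (lam : Cardinal.{0}) : Cardinal.{0} :=
  ppc lam lam.ord.cof

/-- A cardinal is singular if it is infinite and greater than its cofinality. -/
def IsSingular (lam : Cardinal.{0}) : Prop :=
  ℵ₀ ≤ lam ∧ lam.ord.cof < lam

open Set Filter Order

namespace Pcf

universe u v

noncomputable def transRec {β : Sort v} (G : (α : Ordinal.{u}) → (Iio α → β) → β) :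
    Ordinal.{u} → β :=
  Ordinal.lt_wf.fix fun α rec => G α fun η => rec η η.2

theorem transRec_eq {β : Sort v} (G : (α : Ordinal.{u}) → (Iio α → β) → β) (α : Ordinal.{u}) :
    transRec G α = G α fun η => transRec G η :=
  Ordinal.lt_wf.fix_eq _ α

theorem mk_image_Iio_le {β : Type (u + 1)} (f : Ordinal.{u} → β) (o : Ordinal.{u}) :
    #(f '' Iio o) ≤ lift.{u + 1} o.card :=
  mk_image_le.trans (Cardinal.mk_Iio_ordinal o).le

theorem exists_mapsTo_surjOn_Iio_ord {β : Type (u + 1)} {S : Set β} {μ : Cardinal.{u}}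
    (hne : S.Nonempty) (hS : #S ≤ lift.{u + 1} μ) :
    ∃ F : Ordinal.{u} → β, MapsTo F (Iio μ.ord) S ∧ SurjOn F (Iio μ.ord) S := by
  rw [← card_ord μ, ← Cardinal.mk_Iio_ordinal] at hS
  obtain ⟨e⟩ := hS
  have : Nonempty S := hne.to_subtype
  let q : Iio μ.ord → S := Function.invFun e
  have hq : q.Surjective := Function.invFun_surjective e.injective
  refine ⟨fun α => if h : α < μ.ord then q ⟨α, h⟩ else hne.some,
    fun α hα => by simp only [dif_pos (mem_Iio.1 hα), Subtype.coe_prop], fun x hx => ?_⟩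
  obtain ⟨⟨α, hα⟩, hαx⟩ := hq ⟨x, hx⟩
  exact ⟨α, hα, by simp only [dif_pos (mem_Iio.1 hα), hαx]⟩

theorem exists_forall_ge_eq_of_antitone {ι : Type v} {κ : Cardinal.{u}} (hκ : κ.IsRegular)
    (hι : lift.{u} #ι < lift.{v} κ) {B : Ordinal.{u} → Set ι}
    (hB : ∀ ξ ξ', ξ ≤ ξ' → ξ' < κ.ord → B ξ' ⊆ B ξ) :
    ∃ ξ₀ < κ.ord, ∀ ξ, ξ₀ ≤ ξ → ξ < κ.ord → B ξ = B ξ₀ := by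
  let exit (i : ι) : Set Ordinal.{u} := {ξ | ξ < κ.ord ∧ i ∉ B ξ}
  have hexit : ∀ i, sInf (exit i) < κ.ord := fun i => by
    rcases (exit i).eq_empty_or_nonempty with h | h
    · rw [h, Ordinal.sInf_empty]
      exact ord_pos.2 (aleph0_pos.trans_le hκ.aleph0_le)
    · exact (csInf_mem h).1
  have hsup : ⨆ i, sInf (exit i) < κ.ord :=
    lift_iSup_lt_of_lt_cof (by rwa [← lift_cof, hκ.cof_ord]) hexit
  refine ⟨_, hsup, fun ξ hξ₀ hξ => (hB _ _ hξ₀ hξ).antisymm fun i hi => ?_⟩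
  by_contra hiξ
  have hne : (exit i).Nonempty := ⟨ξ, hξ, hiξ⟩
  have hle : sInf (exit i) ≤ ⨆ i, sInf (exit i) :=
    le_ciSup ⟨κ.ord, forall_mem_range.2 fun i => (hexit i).le⟩ i
  exact (csInf_mem hne).2 (hB _ _ hle hsup hi)

variable {A : Set Cardinal.{0}} {θ μ κ : Cardinal.{0}}

/-- The ideal `J_{≤θ}[A]`. -/
def Jle (A : Set Cardinal.{0}) (θ : Cardinal.{0}) : Set (Set A) :=
  {b | ∀ D : Ultrafilter A, b ∈ D → cofUlt A D ≤ lift.{1} θ}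

/-- The ideal `J_{<θ}[A]`. -/
def Jlt (A : Set Cardinal.{0}) (θ : Cardinal.{0}) : Set (Set A) :=
  {b | ∀ D : Ultrafilter A, b ∈ D → cofUlt A D < lift.{1} θ}

/-- `f ≤ g` modulo `J_{≤θ}[A]`. -/
def LEMod (θ : Cardinal.{0}) (f g : A → Ordinal.{0}) : Prop :=
  {i | g i < f i} ∈ Jle A θ

def BddAboveMod (θ : Cardinal.{0}) (S : Set (A → Ordinal.{0})) : Prop :=
  ∃ h ∈ ProdChoice A, ∀ f ∈ S, LEMod θ f h

theorem Jle_subset_Jlt {θ θ' : Cardinal.{0}} (h : θ < θ') : Jle A θ ⊆ Jlt A θ' :=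
  fun _ hb D hD => (hb D hD).trans_lt (lift_lt.2 h)

theorem mem_Jle_of_subset {b b' : Set A} (hb : b ∈ Jle A θ) (h : b' ⊆ b) : b' ∈ Jle A θ :=
  fun D hD => hb D (mem_of_superset hD h)

theorem notMem_of_mem_Jle {b : Set A} {D : Ultrafilter A} (hb : b ∈ Jle A θ)
    (hD : lift.{1} θ < cofUlt A D) : b ∉ D :=
  fun hbD => (hb D hbD).not_gt hD

theorem LEMod.of_le {f g : A → Ordinal.{0}} (h : f ≤ g) : LEMod θ f g := by
  intro D hD
  obtain ⟨i, hi⟩ := D.nonempty_of_mem hD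
  exact absurd (h i) (not_le.2 hi)

theorem LEMod.trans {f g h : A → Ordinal.{0}} (hfg : LEMod θ f g) (hgh : LEMod θ g h) :
    LEMod θ f h := by
  have hsub : {i | h i < f i} ⊆ {i | h i < g i} ∪ {i | g i < f i} := fun i hi =>
    (lt_or_ge (h i) (g i)).imp_right fun hgi => hgi.trans_lt hi
  intro D hD
  exact (D.union_mem_iff.1 (mem_of_superset hD hsub)).elim (hgh D) (hfg D)

theorem zero_mem_prodChoice (hreg : ∀ l ∈ A, l.IsRegular) : (0 : A → Ordinal.{0}) ∈ ProdChoice A :=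
  fun i => ord_pos.2 (aleph0_pos.trans_le (hreg i i.2).aleph0_le)

theorem sup_mem_prodChoice {f g : A → Ordinal.{0}} (hf : f ∈ ProdChoice A) (hg : g ∈ ProdChoice A) :
    f ⊔ g ∈ ProdChoice A :=
  fun i => max_lt (hf i) (hg i)

theorem succ_mem_prodChoice (hreg : ∀ l ∈ A, l.IsRegular) {f : A → Ordinal.{0}}
    (hf : f ∈ ProdChoice A) : (fun i => succ (f i)) ∈ ProdChoice A :=
  fun i => (isSuccLimit_ord (hreg i i.2).aleph0_le).succ_lt (hf i)

theorem cofUlt_le_mk (D : Ultrafilter A) {S : Set (A → Ordinal.{0})} (hS : S ⊆ ProdChoice A)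
    (hdom : ∀ g ∈ ProdChoice A, ∃ f ∈ S, {i | g i ≤ f i} ∈ D) : cofUlt A D ≤ #S :=
  csInf_le' ⟨S, hS, rfl, hdom⟩

theorem exists_cofinal_family (D : Ultrafilter A) :
    ∃ S ⊆ ProdChoice A, #S = cofUlt A D ∧ ∀ g ∈ ProdChoice A, ∃ f ∈ S, {i | g i ≤ f i} ∈ D :=
  csInf_mem (s := {c | ∃ S ⊆ ProdChoice A, #S = c ∧
      ∀ g ∈ ProdChoice A, ∃ f ∈ S, {i | g i ≤ f i} ∈ D})
    ⟨_, ProdChoice A, subset_rfl, rfl, fun g hg =>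
      ⟨g, hg, mem_of_superset univ_mem fun i _ => le_refl (g i)⟩⟩

theorem exists_lt_mod_of_mk_lt (D : Ultrafilter A) {S : Set (A → Ordinal.{0})}
    (hS : S ⊆ ProdChoice A) (hlt : #S < cofUlt A D) :
    ∃ u ∈ ProdChoice A, ∀ f ∈ S, {i | f i < u i} ∈ D := by
  by_contra! h
  refine (cofUlt_le_mk D hS fun g hg => ?_).not_gt hlt
  obtain ⟨f, hf, hfg⟩ := h g hg
  refine ⟨f, hf, ?_⟩
  convert D.compl_mem_iff_notMem.2 hfg using 1
  ext; simp

theorem cofUlt_le_of_singleton_mem (hreg : ∀ l ∈ A, l.IsRegular) {D : Ultrafilter A} {i₀ : A}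
    (h : {i₀} ∈ D) : cofUlt A D ≤ lift.{1} (i₀ : Cardinal) := by
  let S := range fun β : Iio (i₀ : Cardinal).ord => Function.update (0 : A → Ordinal.{0}) i₀ β
  have hS : S ⊆ ProdChoice A := by
    rintro _ ⟨β, rfl⟩ i
    rcases eq_or_ne i i₀ with rfl | hi
    · simpa only [Function.update_self] using mem_Iio.1 β.2
    · simpa [hi] using zero_mem_prodChoice hreg i
  calc cofUlt A D ≤ #S := cofUlt_le_mk D hS fun g hg =>
        ⟨_, ⟨⟨g i₀, hg i₀⟩, rfl⟩, mem_of_superset h (by simp)⟩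
    _ ≤ #(Iio (i₀ : Cardinal).ord) := mk_range_le
    _ = lift.{1} (i₀ : Cardinal) := by rw [Cardinal.mk_Iio_ordinal, card_ord]

theorem bddAboveMod_of_small_coords_mem_Jle (hreg : ∀ l ∈ A, l.IsRegular)
    {S : Set (A → Ordinal.{0})} (hS : S ⊆ ProdChoice A) (hcard : #S ≤ lift.{1} μ)
    (hsmall : {i : A | (i : Cardinal) ≤ μ} ∈ Jle A θ) : BddAboveMod θ S := by
  have hbdd : ∀ i : A, BddAbove (range fun f : S => f.1 i) := fun i =>
    ⟨(i : Cardinal).ord, forall_mem_range.2 fun f => (hS f.2 i).le⟩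
  refine ⟨fun i => if (i : Cardinal) ≤ μ then 0 else ⨆ f : S, f.1 i, fun i => ?_,
    fun f hf => mem_Jle_of_subset hsmall fun i hi => ?_⟩
  · dsimp only
    split_ifs with hi
    · exact zero_mem_prodChoice hreg i
    · refine lift_iSup_lt_of_lt_cof ?_ fun f => hS f.2 i
      rw [← lift_cof, (hreg i i.2).cof_ord, Cardinal.lift_uzero]
      exact hcard.trans_lt (lift_lt.2 (not_le.1 hi))
  · by_contra hiμ
    change ¬(i : Cardinal) ≤ μ at hiμ
    change (if (i : Cardinal) ≤ μ then 0 else _) < f i at hi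
    rw [if_neg hiμ] at hi
    exact hi.not_ge (le_ciSup (hbdd i) ⟨f, hf⟩)

theorem lt_of_small_coords_notMem_Jle (hreg : ∀ l ∈ A, l.IsRegular)
    (hκA : ∀ l ∈ A, κ ≤ l) (hμθ : μ ≤ θ) (h : {i : A | (i : Cardinal) ≤ μ} ∉ Jle A θ) :
    κ < μ := by
  by_contra! hμκ
  refine h fun D hD => ?_
  obtain ⟨i, hi⟩ := D.nonempty_of_mem hD
  have heq : ∀ j ∈ {i : A | (i : Cardinal) ≤ μ}, (j : Cardinal) = μ := fun j hj =>
    le_antisymm hj (hμκ.trans (hκA j j.2))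
  have hiD : {i} ∈ D :=
    mem_of_superset hD fun j hj => Subtype.ext ((heq j hj).trans (heq i hi).symm)
  exact (cofUlt_le_of_singleton_mem hreg hiD).trans (lift_le.2 (hi.trans hμθ))

theorem bddAboveMod_of_not_isRegular (hμ : ℵ₀ ≤ μ) (hsing : μ.ord.cof < μ)
    (IH : ∀ ν < μ, ∀ S ⊆ ProdChoice A, #S ≤ lift.{1} ν → BddAboveMod θ S)
    {S : Set (A → Ordinal.{0})} (hS : S ⊆ ProdChoice A) (hne : S.Nonempty)
    (hcard : #S ≤ lift.{1} μ) : BddAboveMod θ S := by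
  obtain ⟨F, hFS, hSF⟩ := exists_mapsTo_surjOn_Iio_ord hne hcard
  obtain ⟨T, hT, hTcard⟩ := Order.exists_cof_eq (Iio μ.ord)
  have hpiece : ∀ t : T, BddAboveMod θ (F '' Iio t.1.1) := fun t =>
    IH _ (lt_ord.1 t.1.2) _ ((hFS.mono_left (Iio_subset_Iio t.1.2.le)).image_subset.trans hS)
      (mk_image_Iio_le F _)
  choose hp hp_mem hp_bd using hpiece
  have hpcard : #(range hp) ≤ lift.{1} μ.ord.cof := by
    rw [lift_cof, ← Ordinal.cof_Iio, ← hTcard]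
    exact mk_range_le
  obtain ⟨H, hH, hHbd⟩ := IH _ hsing _ (range_subset_iff.2 hp_mem) hpcard
  refine ⟨H, hH, fun f hf => ?_⟩
  obtain ⟨α, hα, rfl⟩ := hSF hf
  obtain ⟨t, ht, hαt⟩ := hT ⟨succ α, (isSuccLimit_ord hμ).succ_lt hα⟩
  exact (hp_bd ⟨t, ht⟩ _ ⟨α, succ_le_iff.1 (Subtype.coe_le_coe.2 hαt), rfl⟩).trans (hHbd _ ⟨_, rfl⟩)

theorem exists_ultrafilter_of_not_LEMod (hμθ : μ ≤ θ) {g : Ordinal.{0} → A → Ordinal.{0}}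
    (hg : ∀ α < μ.ord, g α ∈ ProdChoice A) {f t : A → Ordinal.{0}} (h : ¬ LEMod θ f t) :
    ∃ D : Ultrafilter A, {i | t i < f i} ∈ D ∧ lift.{1} θ < cofUlt A D ∧
      ∃ u ∈ ProdChoice A, ∀ α < μ.ord, {i | g α i < u i} ∈ D := by
  simp only [LEMod, Jle, mem_ofPred_eq, not_forall, not_le, exists_prop] at h
  obtain ⟨D, hD, hθD⟩ := h
  have hcard : #(g '' Iio μ.ord) < cofUlt A D :=
    ((mk_image_Iio_le g _).trans_eq (by rw [card_ord])).trans_lt ((lift_le.2 hμθ).trans_lt hθD)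
  obtain ⟨u, hu, hgu⟩ := exists_lt_mod_of_mk_lt D (image_subset_iff.2 hg) hcard
  exact ⟨D, hD, hθD, u, hu, fun α hα => hgu _ ⟨α, hα, rfl⟩⟩

theorem exists_seq_sup_next_le (hreg : ∀ l ∈ A, l.IsRegular) (hκA : ∀ l ∈ A, κ ≤ l)
    {next : (A → Ordinal.{0}) → A → Ordinal.{0}}
    (hnext : ∀ t ∈ ProdChoice A, next t ∈ ProdChoice A) :
    ∃ h : Ordinal.{0} → A → Ordinal.{0}, (∀ ξ < κ.ord, h ξ ∈ ProdChoice A) ∧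
      ∀ {η ξ}, η < ξ → ∀ i, (h η ⊔ next (h η)) i ≤ h ξ i := by
  let h : Ordinal.{0} → A → Ordinal.{0} :=
    transRec fun ξ prev i => ⨆ η, (prev η ⊔ next (prev η)) i
  have h_eq (ξ : Ordinal.{0}) (i : A) : h ξ i = ⨆ η : Iio ξ, (h η ⊔ next (h η)) i :=
    congrFun (transRec_eq _ ξ) i
  refine ⟨h, fun ξ => ?_, fun {η ξ} hηξ i => (h_eq ξ i).symm ▸
    Ordinal.le_iSup (fun η : Iio ξ => (h η ⊔ next (h η)) i) ⟨η, hηξ⟩⟩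
  induction ξ using WellFoundedLT.induction with
  | _ ξ IH =>
  intro hξ i
  rw [h_eq]
  have hprev (η : Iio ξ) : h η ∈ ProdChoice A := IH η η.2 (η.2.trans hξ)
  refine lift_iSup_lt_of_lt_cof ?_ fun η => sup_mem_prodChoice (hprev η) (hnext _ (hprev η)) i
  rw [Cardinal.mk_Iio_ordinal, Cardinal.lift_uzero, ← lift_cof, (hreg i i.2).cof_ord]
  exact lift_lt.2 ((lt_ord.1 hξ).trans_le (hκA i i.2))

theorem bddAboveMod_image_of_monotone (hreg : ∀ l ∈ A, l.IsRegular) (hκ : κ.IsRegular)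
    (hAκ : #A < lift.{1} κ) (hκA : ∀ l ∈ A, κ ≤ l) (hμ : μ.IsRegular) (hκμ : κ < μ)
    (hμθ : μ ≤ θ) {g : Ordinal.{0} → A → Ordinal.{0}} (hg : ∀ α < μ.ord, g α ∈ ProdChoice A)
    (hmono : ∀ β α, β ≤ α → α < μ.ord → LEMod θ (g β) (g α)) :
    BddAboveMod θ (g '' Iio μ.ord) := by
  by_contra hnb
  have hbad : ∀ t ∈ ProdChoice A, ∃ α < μ.ord, ¬ LEMod θ (g α) t := by
    intro t ht
    by_contra! h
    exact hnb ⟨t, ht, by rintro _ ⟨α, hα, rfl⟩; exact h α hα⟩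
  have hesc : ∀ t, ∃ α, ∃ u : A → Ordinal.{0}, t ∈ ProdChoice A → α < μ.ord ∧
      u ∈ ProdChoice A ∧ ∃ D : Ultrafilter A, {i | t i < g α i} ∈ D ∧
        lift.{1} θ < cofUlt A D ∧ ∀ β < μ.ord, {i | g β i < u i} ∈ D := by
    intro t
    by_cases ht : t ∈ ProdChoice A
    · obtain ⟨α, hα, hnot⟩ := hbad t ht
      obtain ⟨D, hD, hθD, u, hu, hgu⟩ := exists_ultrafilter_of_not_LEMod hμθ hg hnot
      exact ⟨α, u, fun _ => ⟨hα, hu, D, hD, hθD, hgu⟩⟩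
    · exact ⟨0, 0, fun h => absurd h ht⟩
  choose s next hnext using hesc
  obtain ⟨h, h_mem, h_le⟩ := exists_seq_sup_next_le hreg hκA fun t ht => (hnext t ht).2.1
  have h_mono {η ξ : Ordinal.{0}} (hηξ : η ≤ ξ) (i : A) : h η i ≤ h ξ i := by
    rcases hηξ.eq_or_lt with rfl | hlt
    · exact le_rfl
    · exact le_sup_left.trans (h_le hlt i)
  set β := ⨆ ξ : Iio κ.ord, s (h ξ)
  have hβ : β < μ.ord := by
    refine lift_iSup_lt_of_lt_cof ?_ fun ξ => (hnext _ (h_mem ξ ξ.2)).1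
    rwa [Cardinal.mk_Iio_ordinal, card_ord, Cardinal.lift_uzero, ← lift_cof, hμ.cof_ord,
      Cardinal.lift_lt]
  have hsβ : ∀ ξ < κ.ord, s (h ξ) ≤ β := fun ξ hξ =>
    Ordinal.le_iSup (fun ξ : Iio κ.ord => s (h ξ)) ⟨ξ, hξ⟩
  obtain ⟨ξ₁, hξ₁, hstab⟩ := exists_forall_ge_eq_of_antitone (B := fun ξ => {i | h ξ i < g β i}) hκ
    (by rwa [Cardinal.lift_uzero]) fun ξ ξ' hξξ' _ i hi => (h_mono hξξ' i).trans_lt hi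
  obtain ⟨-, -, D, hD, hθD, hnextD⟩ := hnext _ (h_mem ξ₁ hξ₁)
  have hgβ : {i | g β i < g (s (h ξ₁)) i} ∉ D :=
    notMem_of_mem_Jle (hmono _ _ (hsβ ξ₁ hξ₁) hβ) hθD
  have hB₁ : {i | h ξ₁ i < g β i} ∈ D :=
    mem_of_superset (inter_mem hD (D.compl_mem_iff_notMem.2 hgβ)) fun i ⟨h₁, h₂⟩ =>
      h₁.trans_le (not_lt.1 (show ¬ g β i < _ from h₂))
  obtain ⟨i, hi₁, hi₂⟩ := D.nonempty_of_mem (inter_mem hB₁ (hnextD β hβ))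
  -- The escape taken at stage `ξ₁` lifts `h (succ ξ₁)` above `g β` at `i`, against stability.
  have hi₃ : h (succ ξ₁) i < g β i := by
    have := hstab _ (le_succ ξ₁) ((isSuccLimit_ord hκ.aleph0_le).succ_lt hξ₁)
    exact (congrArg (i ∈ ·) this).mpr hi₁
  exact hi₃.not_ge (hi₂.le.trans (le_sup_right.trans (h_le (lt_succ ξ₁) i)))

theorem bddAboveMod_of_isRegular (hreg : ∀ l ∈ A, l.IsRegular) (hκ : κ.IsRegular)
    (hAκ : #A < lift.{1} κ) (hκA : ∀ l ∈ A, κ ≤ l) (hμ : μ.IsRegular) (hκμ : κ < μ)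
    (hμθ : μ ≤ θ) (IH : ∀ ν < μ, ∀ S ⊆ ProdChoice A, #S ≤ lift.{1} ν → BddAboveMod θ S)
    {S : Set (A → Ordinal.{0})} (hS : S ⊆ ProdChoice A) (hne : S.Nonempty)
    (hcard : #S ≤ lift.{1} μ) : BddAboveMod θ S := by
  obtain ⟨F, hFS, hSF⟩ := exists_mapsTo_surjOn_Iio_ord hne hcard
  let ub (P : Set (A → Ordinal.{0})) : A → Ordinal.{0} :=
    Classical.epsilon fun h => h ∈ ProdChoice A ∧ ∀ f ∈ P, LEMod θ f h
  let g : Ordinal.{0} → A → Ordinal.{0} := transRec fun α prev => ub (range prev) ⊔ F α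
  have hg_eq (α : Ordinal.{0}) : g α = ub (range fun η : Iio α => g η) ⊔ F α :=
    transRec_eq _ α
  have hg : ∀ α < μ.ord, g α ∈ ProdChoice A ∧ ∀ β < α, LEMod θ (g β) (g α) := by
    intro α
    induction α using WellFoundedLT.induction with
    | _ α IHα =>
    intro hα
    have hprev : BddAboveMod θ (range fun η : Iio α => g η) :=
      IH _ (lt_ord.1 hα) _ (range_subset_iff.2 fun η => (IHα η η.2 (η.2.trans hα)).1)
        (mk_range_le.trans (Cardinal.mk_Iio_ordinal α).le)
    obtain ⟨hub, hub_bd⟩ := Classical.epsilon_spec hprev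
    rw [hg_eq]
    exact ⟨sup_mem_prodChoice hub (hS (hFS hα)),
      fun β hβ => (hub_bd _ ⟨⟨β, hβ⟩, rfl⟩).trans (LEMod.of_le le_sup_left)⟩
  have hmono (β α : Ordinal.{0}) (hβα : β ≤ α) (hα : α < μ.ord) : LEMod θ (g β) (g α) := by
    rcases hβα.eq_or_lt with rfl | hlt
    · exact LEMod.of_le le_rfl
    · exact (hg α hα).2 β hlt
  obtain ⟨h, hh, hbd⟩ := bddAboveMod_image_of_monotone hreg hκ hAκ hκA hμ hκμ hμθ
    (fun α hα => (hg α hα).1) hmono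
  refine ⟨h, hh, fun f hf => ?_⟩
  obtain ⟨α, hα, rfl⟩ := hSF hf
  exact (LEMod.of_le ((hg_eq α).symm ▸ le_sup_right)).trans (hbd _ ⟨α, hα, rfl⟩)

theorem bddAboveMod_of_mk_le (hreg : ∀ l ∈ A, l.IsRegular) (hκ : κ.IsRegular)
    (hAκ : #A < lift.{1} κ) (hκA : ∀ l ∈ A, κ ≤ l) {S : Set (A → Ordinal.{0})}
    (hS : S ⊆ ProdChoice A) (hcard : #S ≤ lift.{1} θ) : BddAboveMod θ S := by
  suffices ∀ μ ≤ θ, ∀ S ⊆ ProdChoice A, #S ≤ lift.{1} μ → BddAboveMod θ S from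
    this θ le_rfl S hS hcard
  intro μ
  induction μ using WellFoundedLT.induction with
  | _ μ IH =>
  intro hμθ S hS hcard
  rcases S.eq_empty_or_nonempty with rfl | hne
  · exact ⟨0, zero_mem_prodChoice hreg, fun _ hf => hf.elim⟩
  by_cases hsmall : {i : A | (i : Cardinal) ≤ μ} ∈ Jle A θ
  · exact bddAboveMod_of_small_coords_mem_Jle hreg hS hcard hsmall
  have hκμ := lt_of_small_coords_notMem_Jle hreg hκA hμθ hsmall
  have IH' : ∀ ν < μ, ∀ S ⊆ ProdChoice A, #S ≤ lift.{1} ν → BddAboveMod θ S :=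
    fun ν hν => IH ν hν (hν.le.trans hμθ)
  by_cases hμ : μ.IsRegular
  · exact bddAboveMod_of_isRegular hreg hκ hAκ hκA hμ hκμ hμθ IH' hS hne hcard
  · have hμ₀ : ℵ₀ ≤ μ := hκ.aleph0_le.trans hκμ.le
    exact bddAboveMod_of_not_isRegular hμ₀ (not_le.1 fun h => hμ ⟨hμ₀, h⟩) IH' hS hne hcard

theorem exists_mem_Jle_notMem_Jlt (hreg : ∀ l ∈ A, l.IsRegular) (hκ : κ.IsRegular)
    (hAκ : #A < lift.{1} κ) (hκA : ∀ l ∈ A, κ ≤ l) (hθ : θ ∈ pcf A) :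
    ∃ b ∈ Jle A θ, b ∉ Jlt A θ := by
  obtain ⟨D, hD⟩ := hθ
  obtain ⟨S, hS, hcard, hdom⟩ := exists_cofinal_family D
  obtain ⟨h, hh, hbd⟩ := bddAboveMod_of_mk_le hreg hκ hAκ hκA hS (hcard.trans hD).le
  obtain ⟨f, hf, hfD⟩ := hdom _ (succ_mem_prodChoice hreg hh)
  refine ⟨{i | h i < f i}, hbd f hf, fun hlt => (hlt D ?_).ne hD⟩
  simpa only [succ_le_iff] using hfD

theorem mk_pcf_le_of_forall_exists (hgen : ∀ θ ∈ pcf A, ∃ b ∈ Jle A θ, b ∉ Jlt A θ) :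
    #(pcf A) ≤ 2 ^ #A := by
  choose b hb hb' using hgen
  have hinj : Function.Injective fun θ : pcf A => b θ θ.2 := by
    intro x y (hxy : b x x.2 = b y y.2)
    by_contra hne
    rcases lt_or_gt_of_ne (Subtype.coe_ne_coe.2 hne) with h | h
    · exact hb' y y.2 (hxy ▸ Jle_subset_Jlt h (hb x x.2))
    · exact hb' x x.2 (hxy ▸ Jle_subset_Jlt h (hb y y.2))
  calc #(pcf A) ≤ #(Set A) := mk_le_of_injective hinj
    _ = 2 ^ #A := mk_set

theorem exists_isRegular_mk_lt (hreg : ∀ l ∈ A, l.IsRegular) (hgt : ∀ l ∈ A, #A < lift.{1} l) :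
    ∃ κ : Cardinal.{0}, κ.IsRegular ∧ #A < lift.{1} κ ∧ ∀ l ∈ A, κ ≤ l := by
  rcases A.finite_or_infinite with hfin | hinf
  · have : Finite A := hfin.to_subtype
    exact ⟨ℵ₀, isRegular_aleph0, by simp, fun l hl => (hreg l hl).aleph0_le⟩
  obtain ⟨l₀, hl₀⟩ := hinf.nonempty
  obtain ⟨c, hc⟩ := mem_range_lift_of_le (hgt l₀ hl₀).le
  have hc₀ : ℵ₀ ≤ c := by
    have : Infinite A := hinf.to_subtype
    simpa [← hc] using aleph0_le_mk A
  refine ⟨succ c, isRegular_succ hc₀, ?_, fun l hl => succ_le_of_lt ?_⟩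
  · rw [← hc, Cardinal.lift_lt]
    exact lt_succ c
  · exact Cardinal.lift_lt.1 (hc.trans_lt (hgt l hl))

end Pcf

/-- For a set `a` of regular cardinals each greater than `|a|`, `pcf a` contains at most
`2 ^ |a|` cardinals. -/
theorem stmt4 (a : Set Cardinal.{0})
    (hreg : ∀ lam ∈ a, Cardinal.IsRegular lam)
    (hgt : ∀ lam ∈ a, #a < Cardinal.lift.{1} lam) :
    #(pcf a) ≤ 2 ^ #a := by
  obtain ⟨κ, hκ, haκ, hκa⟩ := Pcf.exists_isRegular_mk_lt hreg hgt
  exact Pcf.mk_pcf_le_of_forall_exists fun θ hθ =>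
    Pcf.exists_mem_Jle_notMem_Jlt hreg hκ haκ hκa hθ
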